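/- arXiv:2101.10243 — 2 statements merged into one kernel-verified Lean document; each statement's English description precedes it below -/
import Mathlib

section
/- Let E = (C, ∂) be a cochain complex of vector spaces graded by the nonnegative integers, and let 𝓔 = (𝓒, 𝓭) be the associated Z-graded complex with 𝓒ₙ = Hom(C, C[-n]) and differential 𝓭ₙ(f)|_{C^j} = f^{j+1} ∘ ∂^j + (-1)^{n+1} ∂^{j-n} ∘ f^j. If E is acyclic (all cohomology groups vanish), then 𝓔 is acyclic: every 𝓭-closed element of 𝓒ₙ is a 𝓭-boundary. -/
def lcast (C : ℤ → Type) [∀ j, AddCommGroup (C j)] [∀ j, Module ℂ (C j)]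
    {i j : ℤ} (h : i = j) : C i →ₗ[ℂ] C j := by subst h; exact LinearMap.id

noncomputable def gradedHomDiff (C : ℤ → Type) [∀ j, AddCommGroup (C j)] [∀ j, Module ℂ (C j)]
    (d : ∀ j : ℤ, C j →ₗ[ℂ] C (j + 1)) (n : ℤ) (f : ∀ j : ℤ, C j →ₗ[ℂ] C (j - n)) :
    ∀ j : ℤ, C j →ₗ[ℂ] C (j + 1 - n) :=
  fun j =>
    (f (j + 1)).comp (d j)
      + ((-1 : ℂ) ^ (n + 1)) •
        ((lcast C (show j - n + 1 = j + 1 - n by ring)).comp ((d (j - n)).comp (f j)))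

namespace AcyclicAux

variable (C : ℤ → Type) [∀ j, AddCommGroup (C j)] [∀ j, Module ℂ (C j)]

lemma lcast_lcast {i j k : ℤ} (h1 : i = j) (h2 : j = k) (x : C i) :
    lcast C h2 (lcast C h1 x) = lcast C (h1.trans h2) x := by subst h1; subst h2; rfl

@[simp] lemma lcast_refl {i : ℤ} (h : i = i) (x : C i) : lcast C h x = x := rfl

variable (d : ∀ j : ℤ, C j →ₗ[ℂ] C (j + 1))

lemma d_lcast {i j : ℤ} (h : i = j) (x : C i) :
    d j (lcast C h x) = lcast C (by rw [h]) (d i x) := by subst h; rfl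

variable (n : ℤ) (f : ∀ j : ℤ, C j →ₗ[ℂ] C (j - n))

noncomputable def hMap (j : ℤ) (g : C j →ₗ[ℂ] C (j - (n+1))) : C j →ₗ[ℂ] C (j - n) :=
  f j - ((-1:ℂ)^n) •
    ((lcast C (show j-(n+1)+1 = j-n by ring)).comp ((d (j-(n+1))).comp g))

lemma neg_one_zpow_succ (k : ℤ) : ((-1:ℂ))^(k+1) = -((-1:ℂ))^k := by
  rw [zpow_add₀ (by norm_num : (-1:ℂ) ≠ 0)]; simp

lemma step (hdd : ∀ j : ℤ, (d (j + 1)).comp (d j) = 0)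
    (hacyclic : ∀ (j : ℤ) (x : C (j + 1)), d (j + 1) x = 0 → ∃ y : C j, d j y = x)
    (hf : ∀ j : ℤ, gradedHomDiff C d n f j = 0)
    (j : ℤ) (gm : C j →ₗ[ℂ] C (j - (n+1)))
    (G : C (j+1) →ₗ[ℂ] C (j-n)) (hG : G.comp (d j) = hMap C d n f j gm) :
    ∀ x : C (j+1), d (j+1) x = 0 →
      hMap C d n f (j+1)
        ((lcast C (show j-n = j+1-(n+1) by ring)).comp G) x = 0 := by
  intro x hx
  obtain ⟨y, hy⟩ := hacyclic j x hx
  rw [← hy]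
  simp only [hMap, LinearMap.sub_apply, LinearMap.smul_apply, LinearMap.comp_apply]
  have hGy : G (d j y) = hMap C d n f j gm y := by rw [← LinearMap.comp_apply, hG]
  rw [hGy]
  -- compute d (j+1-(n+1)) (lcast _ (hMap ... y))
  rw [d_lcast C d (show j-n = j+1-(n+1) by ring)]
  -- d (j-n) (hMap j gm y) = d (j-n) (f j y)
  have hC : d (j-n) (hMap C d n f j gm y) = d (j-n) (f j y) := by
    simp only [hMap, LinearMap.sub_apply, LinearMap.smul_apply, LinearMap.comp_apply,
      map_sub, map_smul]
    rw [d_lcast C d (show j-(n+1)+1 = j-n by ring)]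
    have : d (j-(n+1)+1) (d (j-(n+1)) (gm y)) = 0 := by
      rw [← LinearMap.comp_apply, hdd]; rfl
    rw [this, map_zero, smul_zero, sub_zero]
  rw [hC]
  -- from closedness of f
  have hD := congrFun (congrArg DFunLike.coe (hf j)) y
  simp only [gradedHomDiff, LinearMap.add_apply, LinearMap.smul_apply, LinearMap.comp_apply,
    LinearMap.zero_apply] at hD
  have hD' : f (j+1) (d j y)
      = ((-1:ℂ)^n) • lcast C (show j-n+1 = j+1-n by ring) (d (j-n) (f j y)) := by
    rw [eq_neg_of_add_eq_zero_left hD, neg_one_zpow_succ, neg_smul, neg_neg]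
  rw [hD', lcast_lcast]
  exact sub_self _


lemma factor_thru {V V' W : Type} [AddCommGroup V] [Module ℂ V] [AddCommGroup V'] [Module ℂ V']
    [AddCommGroup W] [Module ℂ W] (u : V →ₗ[ℂ] V') (ψ : V →ₗ[ℂ] W)
    (hk : ∀ x : V, u x = 0 → ψ x = 0) :
    ∃ G : V' →ₗ[ℂ] W, G.comp u = ψ := by
  obtain ⟨σ, hσ⟩ := u.rangeRestrict.exists_rightInverse_of_surjective
    (by rw [LinearMap.range_eq_top]; exact u.surjective_rangeRestrict)
  obtain ⟨q, hq⟩ := Submodule.exists_isCompl (LinearMap.range u)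
  refine ⟨(ψ.comp σ).comp (Submodule.linearProjOfIsCompl _ q hq), ?_⟩
  ext x
  simp only [LinearMap.comp_apply]
  have h1 : (Submodule.linearProjOfIsCompl _ q hq) (u x) = ⟨u x, LinearMap.mem_range_self u x⟩ :=
    Submodule.linearProjOfIsCompl_apply_left hq ⟨u x, LinearMap.mem_range_self u x⟩
  rw [h1]
  have h2 : u (σ ⟨u x, LinearMap.mem_range_self u x⟩) = u x := by
    have := congrFun (congrArg DFunLike.coe hσ) ⟨u x, LinearMap.mem_range_self u x⟩
    simpa [LinearMap.rangeRestrict, Subtype.ext_iff] using this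
  have h3 : ψ (σ ⟨u x, LinearMap.mem_range_self u x⟩ - x) = 0 := by
    apply hk; rw [map_sub, h2, sub_self]
  rw [map_sub, sub_eq_zero] at h3
  exact h3

lemma ker_d_zero (hneg : ∀ j : ℤ, j < 0 → Subsingleton (C j))
    (hacyclic : ∀ (j : ℤ) (x : C (j + 1)), d (j + 1) x = 0 → ∃ y : C j, d j y = x)
    {j : ℤ} (hj : j ≤ 0) (x : C j) (hx : d j x = 0) : x = 0 := by
  have h : j = j - 1 + 1 := by ring
  obtain ⟨y, hy⟩ := hacyclic (j - 1) (lcast C h x)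
    (by rw [d_lcast C d h x, hx, map_zero])
  haveI := hneg (j - 1) (by omega)
  rw [Subsingleton.elim y 0, map_zero] at hy
  have h2 := congrArg (lcast C h.symm) hy
  rw [lcast_lcast, map_zero] at h2
  simpa using h2.symm

variable (hdd : ∀ j : ℤ, (d (j + 1)).comp (d j) = 0)
  (hneg : ∀ j : ℤ, j < 0 → Subsingleton (C j))
  (hacyclic : ∀ (j : ℤ) (x : C (j + 1)), d (j + 1) x = 0 → ∃ y : C j, d j y = x)
  (hf : ∀ j : ℤ, gradedHomDiff C d n f j = 0)

noncomputable def gAux : ∀ m : ℕ,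
    {g : C (m:ℤ) →ₗ[ℂ] C ((m:ℤ) - (n+1)) //
      ∀ x : C (m:ℤ), d (m:ℤ) x = 0 → hMap C d n f (m:ℤ) g x = 0} :=
  fun m => Nat.rec
    ⟨0, fun x hx => by
      rw [ker_d_zero C d hneg hacyclic (by norm_num) x hx, map_zero]⟩
    (fun m ih =>
      ⟨(lcast C (show (m:ℤ)-n = (m:ℤ)+1-(n+1) by ring)).comp
          (factor_thru (d (m:ℤ)) (hMap C d n f (m:ℤ) ih.1) (fun x hx => ih.2 x hx)).choose,
       step C d n f hdd hacyclic hf (m:ℤ) ih.1 _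
         (factor_thru (d (m:ℤ)) (hMap C d n f (m:ℤ) ih.1) (fun x hx => ih.2 x hx)).choose_spec⟩)
    m

lemma gAux_succ (m : ℕ) :
    ((gAux C d n f hdd hneg hacyclic hf (m+1)).1).comp (d (m:ℤ))
      = (lcast C (show (m:ℤ)-n = (m:ℤ)+1-(n+1) by ring)).comp
          (hMap C d n f (m:ℤ) (gAux C d n f hdd hneg hacyclic hf m).1) := by
  have h1 : (gAux C d n f hdd hneg hacyclic hf (m+1)).1
      = (lcast C (show (m:ℤ)-n = (m:ℤ)+1-(n+1) by ring)).comp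
          (factor_thru (d (m:ℤ))
            (hMap C d n f (m:ℤ) (gAux C d n f hdd hneg hacyclic hf m).1)
            (fun x hx => (gAux C d n f hdd hneg hacyclic hf m).2 x hx)).choose := rfl
  rw [h1, LinearMap.comp_assoc,
    (factor_thru (d (m:ℤ))
      (hMap C d n f (m:ℤ) (gAux C d n f hdd hneg hacyclic hf m).1)
      (fun x hx => (gAux C d n f hdd hneg hacyclic hf m).2 x hx)).choose_spec]

lemma gAux_succ_apply (m : ℕ) (x : C (m:ℤ)) :
    (gAux C d n f hdd hneg hacyclic hf (m+1)).1 (d (m:ℤ) x)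
      = lcast C (show (m:ℤ)-n = (m:ℤ)+1-(n+1) by ring)
          (hMap C d n f (m:ℤ) (gAux C d n f hdd hneg hacyclic hf m).1 x) :=
  congrFun (congrArg DFunLike.coe (gAux_succ C d n f hdd hneg hacyclic hf m)) x

end AcyclicAux


/-- Lemma 2.8: if the (ℤ-indexed, vanishing in negative degrees) cochain complex `(C, ∂)`
is acyclic, then the associated complex `𝓔` of graded homomorphisms is acyclic:
every 𝓭-closed element of 𝓒ₙ is a 𝓭-boundary. -/
theorem acyclic_gradedHom_of_acyclic
    (C : ℤ → Type) [∀ j, AddCommGroup (C j)] [∀ j, Module ℂ (C j)]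
    (d : ∀ j : ℤ, C j →ₗ[ℂ] C (j + 1))
    (hdd : ∀ j : ℤ, (d (j + 1)).comp (d j) = 0)
    (hneg : ∀ j : ℤ, j < 0 → Subsingleton (C j))
    (hacyclic : ∀ (j : ℤ) (x : C (j + 1)), d (j + 1) x = 0 → ∃ y : C j, d j y = x)
    (n : ℤ) (f : ∀ j : ℤ, C j →ₗ[ℂ] C (j - n))
    (hf : ∀ j : ℤ, gradedHomDiff C d n f j = 0) :
    ∃ g : ∀ j : ℤ, C j →ₗ[ℂ] C (j - (n + 1)),
      ∀ j : ℤ, gradedHomDiff C d (n + 1) g j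
        = (lcast C (show j - n = j + 1 - (n + 1) by ring)).comp (f j) := by
  classical
  refine ⟨fun j => Int.rec
      (fun m => (AcyclicAux.gAux C d n f hdd hneg hacyclic hf m).1)
      (fun m => 0) j, fun j => ?_⟩
  cases j with
  | negSucc m =>
    haveI := hneg (Int.negSucc m) (Int.negSucc_lt_zero m)
    ext x
    rw [Subsingleton.elim x 0]
    simp only [map_zero]
  | ofNat m =>
    ext x
    show lcast C (show ((m+1:ℕ):ℤ)-(n+1) = (m:ℤ)+1-(n+1) by push_cast; ring)
          ((AcyclicAux.gAux C d n f hdd hneg hacyclic hf (m+1)).1 ((d (m:ℤ)) x))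
        + ((-1:ℂ))^(n+1+1) • lcast C (show (m:ℤ)-(n+1)+1 = (m:ℤ)+1-(n+1) by ring)
            ((d ((m:ℤ)-(n+1))) ((AcyclicAux.gAux C d n f hdd hneg hacyclic hf m).1 x))
        = lcast C (show (m:ℤ)-n = (m:ℤ)+1-(n+1) by ring) ((f (m:ℤ)) x)
    rw [AcyclicAux.gAux_succ_apply C d n f hdd hneg hacyclic hf m x]
    simp only [AcyclicAux.hMap, LinearMap.sub_apply, LinearMap.smul_apply,
      LinearMap.comp_apply, map_sub, map_smul]
    rw [AcyclicAux.lcast_lcast]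
    have hsc : ((-1:ℂ))^(n+1+1) = (-1:ℂ)^n := by
      rw [AcyclicAux.neg_one_zpow_succ, AcyclicAux.neg_one_zpow_succ, neg_neg]
    rw [hsc]
    simp only [AcyclicAux.lcast_lcast]
    exact sub_add_cancel _ _
end

section
/- Let f : ℝ → W be a function into a complex vector space of the form f(t) = e^{-zt} Σ_{l=0}^{m-1} c_l t^l / l! with c_{m-1} ≠ 0 and z ∈ ℂ. Define the shift operator (τ*f)(t) = f(t+1). Then (τ* − e^{-z})^m f = 0 and (τ* − e^{-z})^k f ≠ 0 for all k < m. -/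
/-- The shift operator `(τ*f)(t) = f(t+1)` on `W`-valued functions on `ℝ`. -/
def shiftOp (W : Type) [AddCommGroup W] [Module ℂ W] : (ℝ → W) →ₗ[ℂ] (ℝ → W) where
  toFun f := fun t => f (t + 1)
  map_add' _ _ := rfl
  map_smul' _ _ := rfl

section Aux

variable {W : Type} [AddCommGroup W] [Module ℂ W]

/-- Polynomial-exponential function with coefficients `c` and degree `< n`. -/
noncomputable def peFun (z : ℂ) (c : ℕ → W) (n : ℕ) : ℝ → W :=
  fun t => ∑ l ∈ Finset.range n,
    (Complex.exp (-z * (t : ℂ)) * (t : ℂ) ^ l / (l.factorial : ℂ)) • c l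

/-- Coefficients after applying the shifted operator once. -/
noncomputable def stepc (z : ℂ) (c : ℕ → W) (n : ℕ) : ℕ → W :=
  fun j => ∑ i ∈ Finset.range (n - j),
    (Complex.exp (-z) / ((i + 1).factorial : ℂ)) • c (j + 1 + i)

lemma step_eq (z : ℂ) (c : ℕ → W) (n : ℕ) (t : ℝ) :
    peFun z c (n + 1) (t + 1) - Complex.exp (-z) • peFun z c (n + 1) t
      = peFun z (stepc z c n) n t := by
  classical
  set E : ℂ := Complex.exp (-z) with hE
  set Et : ℂ := Complex.exp (-z * (t : ℂ)) with hEt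
  have hexp : Complex.exp (-z * (((t : ℝ) + 1 : ℝ) : ℂ)) = E * Et := by
    push_cast
    rw [hE, hEt, ← Complex.exp_add]
    ring_nf
  have hcast : (((t : ℝ) + 1 : ℝ) : ℂ) = (t : ℂ) + 1 := by push_cast; ring
  -- LHS as a double sum over the triangle
  have lhs_eq : peFun z c (n + 1) (t + 1) - E • peFun z c (n + 1) t
      = ∑ l ∈ Finset.Ico 0 (n + 1), ∑ j ∈ Finset.Ico 0 l,
          ((E * Et / (l.factorial : ℂ)) * ((t : ℂ) ^ j * (l.choose j : ℂ))) • c l := by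
    simp only [peFun, Finset.smul_sum, ← Finset.sum_sub_distrib, Finset.range_eq_Ico]
    refine Finset.sum_congr rfl fun l _ => ?_
    rw [hexp, hcast, smul_smul]
    have hb : ((t : ℂ) + 1) ^ l - (t : ℂ) ^ l
        = ∑ j ∈ Finset.range l, (t : ℂ) ^ j * (l.choose j : ℂ) := by
      rw [add_pow]
      simp [Finset.sum_range_succ]
    have : (E * Et * ((t : ℂ) + 1) ^ l / (l.factorial : ℂ)) • c l
        - (E * (Et * (t : ℂ) ^ l / (l.factorial : ℂ))) • c l
        = ((E * Et / (l.factorial : ℂ)) * (((t : ℂ) + 1) ^ l - (t : ℂ) ^ l)) • c l := by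
      rw [← sub_smul]; congr 1; ring
    rw [this, hb, Finset.mul_sum, Finset.sum_smul, Finset.range_eq_Ico]
  rw [lhs_eq, ← Finset.sum_Ico_Ico_comm' 0 (n + 1)
      (fun j l => ((E * Et / (l.factorial : ℂ)) * ((t : ℂ) ^ j * (l.choose j : ℂ))) • c l)]
  -- Now the LHS is  ∑ j ∈ [0,n+1), ∑ l ∈ [j+1, n+1), coeff • c l
  have rhs_eq : peFun z (stepc z c n) n t
      = ∑ j ∈ Finset.Ico 0 (n + 1), ∑ l ∈ Finset.Ico (j + 1) (n + 1),
          ((Et * (t : ℂ) ^ j / (j.factorial : ℂ)) * (E / ((l - j).factorial : ℂ))) • c l := by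
    rw [peFun, Finset.range_eq_Ico, ← Finset.sum_Ico_consecutive _ (Nat.zero_le n) (Nat.le_succ n)]
    have h2 : ∑ j ∈ Finset.Ico n (n + 1), ∑ l ∈ Finset.Ico (j + 1) (n + 1),
        ((Et * (t : ℂ) ^ j / (j.factorial : ℂ)) * (E / ((l - j).factorial : ℂ))) • c l = 0 := by
      apply Finset.sum_eq_zero
      intro j hj
      simp only [Finset.mem_Ico] at hj
      have : Finset.Ico (j + 1) (n + 1) = ∅ := by
        apply Finset.Ico_eq_empty; omega
      simp [this]
    rw [h2, add_zero]
    refine Finset.sum_congr rfl fun j hj => ?_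
    simp only [Finset.mem_Ico] at hj
    rw [stepc, Finset.smul_sum, Finset.sum_Ico_eq_sum_range]
    have hn : n + 1 - (j + 1) = n - j := by omega
    rw [hn]
    refine Finset.sum_congr rfl fun i hi => ?_
    have : j + 1 + i - j = i + 1 := by omega
    rw [this, smul_smul]
  rw [rhs_eq]
  refine Finset.sum_congr rfl fun j hj => Finset.sum_congr rfl fun l hl => ?_
  simp only [Finset.mem_Ico] at hj hl
  have hjl : j ≤ l := by omega
  congr 1
  rw [Nat.cast_choose ℂ hjl]
  have h1 : (j.factorial : ℂ) ≠ 0 := Nat.cast_ne_zero.mpr j.factorial_ne_zero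
  have h2 : ((l - j).factorial : ℂ) ≠ 0 := Nat.cast_ne_zero.mpr (l - j).factorial_ne_zero
  have h3 : (l.factorial : ℂ) ≠ 0 := Nat.cast_ne_zero.mpr l.factorial_ne_zero
  field_simp

lemma opApply (W : Type) [AddCommGroup W] [Module ℂ W] (z : ℂ) (g : ℝ → W) :
    (shiftOp W - Complex.exp (-z) • 1) g = fun t => g (t + 1) - Complex.exp (-z) • g t := by
  funext t
  simp [shiftOp]

lemma op_peFun (W : Type) [AddCommGroup W] [Module ℂ W] (z : ℂ) (c : ℕ → W) (n : ℕ) :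
    (shiftOp W - Complex.exp (-z) • 1) (peFun z c (n + 1)) = peFun z (stepc z c n) n := by
  rw [opApply]
  funext t
  exact step_eq z c n t

end Aux

/-- Model computation for Theorem 2.12: for a polynomial-exponential function
`f(t) = e^{-zt} Σ_{l<m} c_l t^l / l!` with `c_{m-1} ≠ 0`, one has
`(τ* − e^{-z})^m f = 0` and `(τ* − e^{-z})^k f ≠ 0` for all `k < m`. -/
theorem shift_generalized_eigenfunction
    (W : Type) [AddCommGroup W] [Module ℂ W] (z : ℂ) (m : ℕ) (hm : 1 ≤ m)
    (c : ℕ → W) (hc : c (m - 1) ≠ 0) (f : ℝ → W)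
    (hf : ∀ t : ℝ,
      f t = ∑ l ∈ Finset.range m,
        (Complex.exp (-z * (t : ℂ)) * (t : ℂ) ^ l / (l.factorial : ℂ)) • c l) :
    ((shiftOp W - Complex.exp (-z) • 1) ^ m) f = 0 ∧
      ∀ k < m, ((shiftOp W - Complex.exp (-z) • 1) ^ k) f ≠ 0 := by
  set A : (ℝ → W) →ₗ[ℂ] (ℝ → W) := shiftOp W - Complex.exp (-z) • 1 with hA
  have hf' : f = peFun z c m := funext hf
  -- main induction
  have key : ∀ k, k < m → ∃ d : ℕ → W, (A ^ k) f = peFun z d (m - k)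
      ∧ d (m - 1 - k) = (Complex.exp (-z)) ^ k • c (m - 1) := by
    intro k
    induction k with
    | zero =>
      intro _
      exact ⟨c, by simpa using hf', by simp⟩
    | succ k ih =>
      intro hk
      obtain ⟨d, hd1, hd2⟩ := ih (by omega)
      refine ⟨stepc z d (m - (k + 1)), ?_, ?_⟩
      · have hmk : m - k = (m - (k + 1)) + 1 := by omega
        rw [pow_succ', Module.End.mul_apply, hd1, hmk, op_peFun]
      · have hidx : m - (k + 1) - 1 = m - 1 - (k + 1) := by omega
        have h1 : m - (k + 1) - (m - 1 - (k + 1)) = 1 := by omega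
        have h2 : m - 1 - (k + 1) + 1 + 0 = m - 1 - k := by omega
        rw [stepc]
        rw [h1]
        rw [Finset.sum_range_one, h2, hd2, smul_smul, pow_succ']
        simp
  constructor
  · -- A ^ m f = 0
    obtain ⟨d, hd1, _⟩ := key (m - 1) (by omega)
    have hm1 : m = (m - 1) + 1 := by omega
    have hmm : m - (m - 1) = 1 := by omega
    rw [hm1, pow_succ', Module.End.mul_apply, hd1, hmm]
    rw [show (1 : ℕ) = 0 + 1 from rfl, op_peFun]
    funext t
    simp [peFun]
  · -- A ^ k f ≠ 0 for k < m
    intro k hk hzero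
    obtain ⟨d, hd1, hd2⟩ := key (m - 1) (by omega)
    have hmm : m - (m - 1) = 1 := by omega
    have hsplit : (m - 1) = (m - 1 - k) + k := by omega
    have : (A ^ (m - 1)) f = 0 := by
      rw [hsplit, pow_add, Module.End.mul_apply, hzero, map_zero]
    rw [hd1, hmm] at this
    have hval := congrFun this 0
    have hd0 : d 0 ≠ 0 := by
      rw [show m - 1 - (m - 1) = 0 from by omega] at hd2
      rw [hd2]
      exact smul_ne_zero (pow_ne_zero _ (Complex.exp_ne_zero _)) hc
    apply hd0
    simpa [peFun] using hval
end
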